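/- arXiv:1412.0113 — 2 statements merged into one kernel-verified Lean document; each statement's English description precedes it below -/
import Mathlib

section
/- Every strictly semi-positive tensor is a Q-tensor; in particular every P-tensor is a Q-tensor. -/
open Finset

/-- The $i$-th component of $\mathcal{A}x^{m-1}$ for an order-$(m+2)$, dimension-$n$ tensor. -/
def Axm1 {m n : ℕ} (A : (Fin (m + 2) → Fin n) → ℝ) (x : Fin n → ℝ) (i : Fin n) : ℝ :=
  ∑ f : Fin (m + 1) → Fin n, A (Fin.cons i f) * ∏ j, x (f j)

/-- The homogeneous form $\mathcal{A}x^{m}$. -/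
def Axm {m n : ℕ} (A : (Fin (m + 2) → Fin n) → ℝ) (x : Fin n → ℝ) : ℝ :=
  ∑ f : Fin (m + 2) → Fin n, A f * ∏ j, x (f j)

/-- `x` solves the tensor complementarity problem $(q, \mathcal{A})$. -/
def IsTCPSol {m n : ℕ} (A : (Fin (m + 2) → Fin n) → ℝ) (q x : Fin n → ℝ) : Prop :=
  (∀ i, 0 ≤ x i) ∧ (∀ i, 0 ≤ q i + Axm1 A x i) ∧ ∑ i, x i * (q i + Axm1 A x i) = 0

/-- Q-tensor: the TCP $(q,\mathcal{A})$ has a solution for every $q$. -/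
def QTensor {m n : ℕ} (A : (Fin (m + 2) → Fin n) → ℝ) : Prop :=
  ∀ q : Fin n → ℝ, ∃ x : Fin n → ℝ, IsTCPSol A q x

/-- R-tensor. -/
def RTensor {m n : ℕ} (A : (Fin (m + 2) → Fin n) → ℝ) : Prop :=
  ¬ ∃ (x : Fin n → ℝ) (t : ℝ), (∀ i, 0 ≤ x i) ∧ x ≠ 0 ∧ 0 ≤ t ∧
      (∀ i, 0 < x i → Axm1 A x i + t = 0) ∧ (∀ j, x j = 0 → 0 ≤ Axm1 A x j + t)

/-- R₀-tensor. -/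
def R0Tensor {m n : ℕ} (A : (Fin (m + 2) → Fin n) → ℝ) : Prop :=
  ¬ ∃ x : Fin n → ℝ, (∀ i, 0 ≤ x i) ∧ x ≠ 0 ∧
      (∀ i, 0 < x i → Axm1 A x i = 0) ∧ (∀ j, x j = 0 → 0 ≤ Axm1 A x j)

/-- Semi-positive tensor. -/
def SemiPositive {m n : ℕ} (A : (Fin (m + 2) → Fin n) → ℝ) : Prop :=
  ∀ x : Fin n → ℝ, (∀ i, 0 ≤ x i) → x ≠ 0 → ∃ k, 0 < x k ∧ 0 ≤ Axm1 A x k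

/-- Strictly semi-positive tensor. -/
def StrictlySemiPositive {m n : ℕ} (A : (Fin (m + 2) → Fin n) → ℝ) : Prop :=
  ∀ x : Fin n → ℝ, (∀ i, 0 ≤ x i) → x ≠ 0 → ∃ k, 0 < x k ∧ 0 < Axm1 A x k

/-- P-tensor. -/
def PTensor {m n : ℕ} (A : (Fin (m + 2) → Fin n) → ℝ) : Prop :=
  ∀ x : Fin n → ℝ, x ≠ 0 → ∃ i, 0 < x i * Axm1 A x i

/-- Symmetric tensor: entries invariant under permutation of indices. -/
def SymTensor {m n : ℕ} (A : (Fin (m + 2) → Fin n) → ℝ) : Prop :=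
  ∀ (f : Fin (m + 2) → Fin n) (σ : Equiv.Perm (Fin (m + 2))), A (f ∘ σ) = A f

/-- Copositive tensor. -/
def Copositive {m n : ℕ} (A : (Fin (m + 2) → Fin n) → ℝ) : Prop :=
  ∀ x : Fin n → ℝ, (∀ i, 0 ≤ x i) → 0 ≤ Axm A x

/-- Strictly copositive tensor. -/
def StrictlyCopositive {m n : ℕ} (A : (Fin (m + 2) → Fin n) → ℝ) : Prop :=
  ∀ x : Fin n → ℝ, (∀ i, 0 ≤ x i) → x ≠ 0 → 0 < Axm A x

open Metric Set Filter Topology NNReal MeasureTheory Polynomial RealInnerProductSpace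

/-!
The topological input is the C¹ Brouwer fixed point theorem, proved by Milnor's argument. If a C¹
map `r`, defined near the closed unit ball, fixes the unit sphere and maps into it, then for small
`t` the map `x ↦ x + t • (r x - x)` is injective with positive Jacobian and maps the ball onto
itself, so the integral of its Jacobian over the ball is the volume of the ball. This integral is a
polynomial in `t`, hence also equals the volume at `t = 1`, where the Jacobian of `r` vanishes
identically. A fixed-point-free self-map `f` of the ball yields such an `r` by pushing `x` along
the ray from `f x` through `x` to the sphere.

For the complementarity problem, Brouwer gives fixed points `z` of a smoothed clamp of
`z - (q + 𝒜 z^{m-1})` onto the box `[0, R]ⁿ`. As the smoothing vanishes and `R → ∞`, bounded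
families of such fixed points accumulate at solutions. Unbounded ones, normalised, accumulate at
some `y ≥ 0`, `y ≠ 0` with `(𝒜 y^{m-1})_k ≤ 0` whenever `y_k > 0`, which strict
semi-positivity forbids. A P-tensor is strictly semi-positive.
-/

theorem Matrix.det_one_add_smul_eq_sum {ι R : Type*} [Fintype ι] [DecidableEq ι] [CommRing R]
    (N : Matrix ι ι R) (t : R) :
    (1 + t • N).det = ∑ k ∈ range (Fintype.card ι + 1),
      (∑ s ∈ powersetCard k univ, (N.submatrix (Subtype.val : s → ι) Subtype.val).det) * t ^ k := by
  have heval : (1 + t • N).det = (det (1 + (X : R[X]) • N.map C)).eval t := by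
    rw [← coe_evalRingHom, RingHom.map_det]
    congr 1
    ext i j
    simp only [RingHom.mapMatrix_apply, Matrix.map_apply, Matrix.add_apply, Matrix.smul_apply,
      Matrix.one_apply, coe_evalRingHom, eval_add, smul_eq_mul]
    split_ifs <;> simp <;> ring
  have hdeg : (det (1 + (X : R[X]) • N.map C)).natDegree < Fintype.card ι + 1 := by
    have := natDegree_det_X_add_C_le N 1
    rw [Matrix.map_one _ (map_zero C) (map_one C), add_comm] at this
    omega
  simp_rw [heval, eval_eq_sum_range' hdeg, coeff_det_one_add_X_smul_eq_sum_minors]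

section NoRetraction

variable {E : Type*} [NormedAddCommGroup E] [NormedSpace ℝ E]

theorem ContinuousLinearMap.det_one_add_pos_of_norm_lt_one [CompleteSpace E] {T : E →L[ℝ] E}
    (hT : ‖T‖ < 1) : 0 < (1 + T).det := by
  have hne : ∀ s ∈ Icc (0 : ℝ) 1, (1 + s • T).det ≠ 0 := by
    intro s hs
    have hsT : ‖-(s • T)‖ < 1 := by
      rw [norm_neg, norm_smul, Real.norm_of_nonneg hs.1]
      nlinarith [hs.2, norm_nonneg T]
    have hunit := (Units.oneSub _ hsT).isUnit.map ContinuousLinearMap.toLinearMapRingHom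
    rw [Units.val_oneSub, sub_neg_eq_add] at hunit
    exact (LinearMap.isUnit_det _ hunit).ne_zero
  by_contra! hle
  have hcont : ContinuousOn (fun s : ℝ => (1 + s • T).det) (Icc 0 1) :=
    (ContinuousLinearMap.continuous_det.comp (by fun_prop)).continuousOn
  obtain ⟨s, hs, hs0⟩ := intermediate_value_Icc' zero_le_one hcont
    ⟨by simpa using hle, by simp [ContinuousLinearMap.det]⟩
  exact hne s hs hs0

theorem HasStrictFDerivAt.map_nhds_eq_of_det_ne_zero [FiniteDimensional ℝ E] {φ : E → E}
    {T : E →L[ℝ] E} {x : E} (hφ : HasStrictFDerivAt φ T x) (hT : T.det ≠ 0) :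
    map φ (𝓝 x) = 𝓝 (φ x) :=
  hφ.map_nhds_eq_of_equiv (f' := (LinearMap.equivOfDetNeZero _ hT).toContinuousLinearEquiv)

theorem exists_polynomial_eval_eq_setIntegral_det [FiniteDimensional ℝ E] {α : Type*}
    [TopologicalSpace α] [T2Space α] [MeasurableSpace α] [OpensMeasurableSpace α]
    (μ : Measure α) [IsFiniteMeasureOnCompacts μ]
    {K : Set α} (hK : IsCompact K) {D : α → E →L[ℝ] E} (hD : ContinuousOn D K) :
    ∃ p : ℝ[X], ∀ t, p.eval t = ∫ x in K, (1 + t • D x).det ∂μ := by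
  classical
  let b := Module.finBasis ℝ E
  let toMat : (E →L[ℝ] E) →ₗ[ℝ] Matrix (Fin _) (Fin _) ℝ :=
    (LinearMap.toMatrix b b).toLinearMap ∘ₗ ContinuousLinearMap.coeLM ℝ
  let c : ℕ → α → ℝ := fun k x =>
    ∑ s ∈ powersetCard k univ, ((toMat (D x)).submatrix (Subtype.val : s → _) Subtype.val).det
  have hc : ∀ k, IntegrableOn (c k) K μ := fun k =>
    ContinuousOn.integrableOn_compact hK <| by
      have := toMat.continuous_of_finiteDimensional
      fun_prop
  refine ⟨∑ k ∈ range (Module.finrank ℝ E + 1), C (∫ x in K, c k x ∂μ) * X ^ k, fun t => ?_⟩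
  have hdet : ∀ x, (1 + t • D x).det = ∑ k ∈ range (Module.finrank ℝ E + 1), c k x * t ^ k := by
    intro x
    rw [ContinuousLinearMap.det, ← LinearMap.det_toMatrix b]
    convert Matrix.det_one_add_smul_eq_sum (toMat (D x)) t using 2
    · simp [toMat]
    · simp
  simp_rw [hdet]
  rw [integral_finsetSum _ fun k _ => (hc k).mul_const _]
  simp [eval_finsetSum, integral_mul_const]

theorem setIntegral_det_eq_measureReal_image [FiniteDimensional ℝ E] [MeasurableSpace E]
    [BorelSpace E] (μ : Measure E) [μ.IsAddHaarMeasure] {f : E → E} {f' : E → E →L[ℝ] E}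
    {s : Set E} (hs : MeasurableSet s) (hf' : ∀ x ∈ s, HasFDerivWithinAt f (f' x) s x)
    (hinj : InjOn f s) (hpos : ∀ x ∈ s, 0 ≤ (f' x).det) :
    ∫ x in s, (f' x).det ∂μ = μ.real (f '' s) := by
  have := integral_image_eq_integral_abs_det_fderiv_smul μ hs hf' hinj fun _ => (1 : ℝ)
  rw [setIntegral_const, smul_eq_mul, mul_one] at this
  rw [this]
  refine setIntegral_congr_fun hs fun x hx => ?_
  simp [abs_of_nonneg (hpos x hx)]

theorem LipschitzOnWith.injOn_add_smul {h : E → E} {s : Set E} {L : ℝ≥0}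
    (hh : LipschitzOnWith L h s) {t : ℝ} (ht : |t| * L < 1) :
    InjOn (fun x => x + t • h x) s := by
  intro x hx y hy hxy
  have hxy' : x - y = t • (h y - h x) := by
    rw [smul_sub]; linear_combination (norm := module) hxy
  have hle : ‖x - y‖ ≤ |t| * L * ‖x - y‖ := by
    calc ‖x - y‖ = |t| * ‖h y - h x‖ := by rw [hxy', norm_smul, Real.norm_eq_abs]
      _ ≤ |t| * (L * ‖y - x‖) := by
          gcongr
          simpa [dist_eq_norm] using hh.dist_le_mul y hy x hx
      _ = |t| * L * ‖x - y‖ := by rw [norm_sub_rev]; ring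
  have : ‖x - y‖ = 0 := by nlinarith [norm_nonneg (x - y)]
  exact sub_eq_zero.1 (norm_eq_zero.1 this)

theorem closedBall_subset_of_inter_ball_subset_interior {S : Set E} (hS : IsClosed S)
    (hint : S ∩ ball 0 1 ⊆ interior S) (hne : (S ∩ ball 0 1).Nonempty) :
    closedBall 0 1 ⊆ S := by
  have hball : ball (0 : E) 1 ⊆ interior S := by
    obtain ⟨y, hyS, hy⟩ := hne
    refine (convex_ball (0 : E) 1).isPreconnected.subset_left_of_subset_union isOpen_interior
      hS.isOpen_compl (disjoint_compl_right.mono_left interior_subset) (fun z hz => ?_)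
      ⟨y, hy, hint ⟨hyS, hy⟩⟩
    by_cases hzS : z ∈ S
    exacts [Or.inl (hint ⟨hzS, hz⟩), Or.inr hzS]
  rw [← closure_ball 0 one_ne_zero]
  exact closure_minimal (hball.trans interior_subset) hS

theorem image_closedBall_eq_of_injOn [ProperSpace E] {g : E → E}
    (hg : ContinuousOn g (closedBall 0 1)) (hmaps : MapsTo g (closedBall 0 1) (closedBall 0 1))
    (hinj : InjOn g (closedBall 0 1))
    (hsphere : EqOn g id (sphere 0 1)) (hopen : ∀ x ∈ ball (0 : E) 1, map g (𝓝 x) = 𝓝 (g x)) :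
    g '' closedBall 0 1 = closedBall 0 1 := by
  refine (mapsTo_iff_image_subset.1 hmaps).antisymm
    (closedBall_subset_of_inter_ball_subset_interior
      ((isCompact_closedBall 0 1).image_of_continuousOn hg).isClosed ?_ ?_)
  · rintro _ ⟨⟨x, hx, rfl⟩, hgx⟩
    have hx' : x ∈ ball (0 : E) 1 := by
      refine mem_ball_zero_iff.2 (lt_of_le_of_ne (mem_closedBall_zero_iff.1 hx) fun h => ?_)
      rw [hsphere (mem_sphere_zero_iff_norm.2 h)] at hgx
      simp [h] at hgx
    rw [mem_interior_iff_mem_nhds, ← hopen x hx']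
    exact mem_of_superset (image_mem_map (isOpen_ball.mem_nhds hx'))
      (image_mono ball_subset_closedBall)
  · have h0 : (0 : E) ∈ closedBall 0 1 := mem_closedBall_self zero_le_one
    refine ⟨g 0, mem_image_of_mem g h0, mem_ball_zero_iff.2 ?_⟩
    refine lt_of_le_of_ne (mem_closedBall_zero_iff.1 (hmaps h0)) fun h => ?_
    have hg0 : g (g 0) = g 0 := hsphere (mem_sphere_zero_iff_norm.2 h)
    have := hinj (hmaps h0) h0 hg0
    simp [this] at h

theorem det_eq_zero_of_eventually_mem_sphere [FiniteDimensional ℝ E] [Nontrivial E]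
    {r : E → E} {T : E →L[ℝ] E} {x : E} (hr : HasStrictFDerivAt r T x)
    (hsphere : ∀ᶠ y in 𝓝 x, r y ∈ sphere (0 : E) 1) : T.det = 0 := by
  by_contra hT
  have : sphere (0 : E) 1 ∈ 𝓝 (r x) := hr.map_nhds_eq_of_det_ne_zero hT ▸ hsphere
  simpa [interior_sphere'] using mem_interior_iff_mem_nhds.2 this

theorem ContDiffOn.hasStrictFDerivAt_homotopy {r : E → E} {U : Set E} (hU : IsOpen U)
    (hr : ContDiffOn ℝ 1 r U) (t : ℝ) {x : E} (hx : x ∈ U) :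
    HasStrictFDerivAt (fun y => y + t • (r y - y)) (1 + t • (fderiv ℝ r x - 1)) x :=
  (hasStrictFDerivAt_id x).add
    ((((hr.contDiffAt (hU.mem_nhds hx)).hasStrictFDerivAt one_ne_zero).sub
      (hasStrictFDerivAt_id x)).const_smul t)

theorem exists_setIntegral_det_homotopy_eq_measureReal [FiniteDimensional ℝ E]
    [MeasurableSpace E] [BorelSpace E] (μ : Measure E) [μ.IsAddHaarMeasure] {r : E → E}
    {U : Set E} (hU : IsOpen U) (hKU : closedBall 0 1 ⊆ U) (hr : ContDiffOn ℝ 1 r U)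
    (hmaps : MapsTo r (closedBall 0 1) (closedBall 0 1)) (hfix : EqOn r id (sphere 0 1)) :
    ∃ δ > (0 : ℝ), ∀ t ∈ Icc 0 δ, ∫ x in closedBall 0 1, (1 + t • (fderiv ℝ r x - 1)).det ∂μ =
      μ.real (closedBall 0 1) := by
  obtain ⟨C, hC⟩ := (isCompact_closedBall (0 : E) 1).exists_bound_of_continuousOn
    (((hr.continuousOn_fderiv_of_isOpen hU le_rfl).mono hKU).sub continuousOn_const)
  set L := C.toNNReal
  have hL : ∀ x ∈ closedBall (0 : E) 1, ‖fderiv ℝ r x - 1‖₊ ≤ L := fun x hx =>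
    NNReal.le_toNNReal_of_coe_le (hC x hx)
  have hlip : LipschitzOnWith L (fun y => r y - y) (closedBall 0 1) :=
    (convex_closedBall 0 1).lipschitzOnWith_of_nnnorm_hasFDerivWithin_le
      (fun x hx => (((hr.contDiffAt (hU.mem_nhds (hKU hx))).hasStrictFDerivAt one_ne_zero).sub
        (hasStrictFDerivAt_id x)).hasFDerivAt.hasFDerivWithinAt) hL
  refine ⟨1 / (L + 1), by positivity, fun t ⟨ht0, htδ⟩ => ?_⟩
  have htL : t * L < 1 := by
    rw [le_div_iff₀ (by positivity)] at htδ
    nlinarith [L.coe_nonneg]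
  have ht1 : t ≤ 1 := htδ.trans (div_le_one_of_le₀ (by simp) (by positivity))
  have hpos : ∀ x ∈ closedBall (0 : E) 1, 0 < (1 + t • (fderiv ℝ r x - 1)).det := by
    refine fun x hx => ContinuousLinearMap.det_one_add_pos_of_norm_lt_one ?_
    have hx' : ‖fderiv ℝ r x - 1‖ ≤ L := hL x hx
    rw [norm_smul, Real.norm_of_nonneg ht0]
    exact (mul_le_mul_of_nonneg_left hx' ht0).trans_lt htL
  have hinj : InjOn (fun y => y + t • (r y - y)) (closedBall 0 1) :=
    hlip.injOn_add_smul (by rwa [abs_of_nonneg ht0])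
  have himage : (fun y => y + t • (r y - y)) '' closedBall 0 1 = closedBall 0 1 := by
    refine image_closedBall_eq_of_injOn ?_ (fun x hx => ?_) hinj (fun x hx => ?_) (fun x hx => ?_)
    · exact continuousOn_id.add (((hr.continuousOn.mono hKU).sub continuousOn_id).const_smul t)
    · exact (convex_closedBall 0 1).add_smul_sub_mem hx (hmaps hx) ⟨ht0, ht1⟩
    · simp [hfix hx]
    · have hx' := ball_subset_closedBall hx
      exact (hr.hasStrictFDerivAt_homotopy hU t (hKU hx')).map_nhds_eq_of_det_ne_zero
        (hpos x hx').ne'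
  rw [setIntegral_det_eq_measureReal_image μ measurableSet_closedBall
    (fun x hx => (hr.hasStrictFDerivAt_homotopy hU t (hKU hx)).hasFDerivAt.hasFDerivWithinAt)
    hinj fun x hx => (hpos x hx).le, himage]

theorem not_mapsTo_sphere_of_contDiffOn [FiniteDimensional ℝ E] {r : E → E} {U : Set E}
    (hU : IsOpen U) (hKU : closedBall 0 1 ⊆ U) (hr : ContDiffOn ℝ 1 r U)
    (hfix : EqOn r id (sphere 0 1)) : ¬ MapsTo r U (sphere 0 1) := by
  intro hmaps
  rcases subsingleton_or_nontrivial E with hE | hE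
  · simpa [Subsingleton.elim (r 0) 0] using hmaps (hKU (mem_closedBall_self zero_le_one))
  borelize E
  let μ : Measure E := Measure.addHaar
  obtain ⟨δ, hδ, hsmall⟩ := exists_setIntegral_det_homotopy_eq_measureReal μ hU hKU hr
    (fun x hx => sphere_subset_closedBall (hmaps (hKU hx))) hfix
  obtain ⟨p, hp⟩ := exists_polynomial_eval_eq_setIntegral_det μ (isCompact_closedBall 0 1)
    (D := fun x => fderiv ℝ r x - 1)
    (((hr.continuousOn_fderiv_of_isOpen hU le_rfl).mono hKU).sub continuousOn_const)
  have hpC : p = C (μ.real (closedBall 0 1)) :=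
    eq_of_infinite_eval_eq _ _ ((Icc_infinite hδ).mono fun t ht => by simp [hp, hsmall t ht])
  have hdet : ∫ x in closedBall 0 1, (1 + (1 : ℝ) • (fderiv ℝ r x - 1)).det ∂μ = 0 := by
    refine setIntegral_eq_zero_of_forall_eq_zero fun x hx => ?_
    have hrx := (hr.contDiffAt (hU.mem_nhds (hKU hx))).hasStrictFDerivAt one_ne_zero
    simpa using det_eq_zero_of_eventually_mem_sphere hrx
      (mem_of_superset (hU.mem_nhds (hKU hx)) hmaps)
  rw [← hp, hpC, eval_C] at hdet
  exact (measure_closedBall_pos μ 0 zero_lt_one).ne'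
    ((measureReal_eq_zero_iff measure_closedBall_lt_top.ne).1 hdet)

end NoRetraction

section Brouwer

variable {F : Type*} [NormedAddCommGroup F] [InnerProductSpace ℝ F]

/-- `x + τ • d` lies on the unit sphere iff `‖d‖² τ² + 2 ⟪x, d⟫ τ + ‖x‖² - 1 = 0`; `rayDiscr x d` is
the quarter discriminant of this quadratic and `sphereHitTime x d` its larger root. -/
def rayDiscr (x d : F) : ℝ := ⟪x, d⟫ ^ 2 + ‖d‖ ^ 2 * (1 - ‖x‖ ^ 2)

noncomputable def sphereHitTime (x d : F) : ℝ := (-⟪x, d⟫ + √(rayDiscr x d)) / ‖d‖ ^ 2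

theorem ne_zero_of_rayDiscr_pos {x d : F} (h : 0 < rayDiscr x d) : d ≠ 0 := by
  rintro rfl; simp [rayDiscr] at h

theorem norm_add_sphereHitTime_smul {x d : F} (h : 0 < rayDiscr x d) :
    ‖x + sphereHitTime x d • d‖ = 1 := by
  have hd := ne_zero_of_rayDiscr_pos h
  have hd2 : 0 < ‖d‖ ^ 2 := by positivity
  have hs := Real.sq_sqrt h.le
  set τ := sphereHitTime x d
  have hroot : τ ^ 2 * ‖d‖ ^ 2 + 2 * τ * ⟪x, d⟫ = 1 - ‖x‖ ^ 2 := by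
    simp only [τ, sphereHitTime]
    field_simp
    unfold rayDiscr at hs ⊢
    linear_combination hs
  have : ‖x + τ • d‖ ^ 2 = 1 := by
    rw [norm_add_sq_real, inner_smul_right, norm_smul, mul_pow, Real.norm_eq_abs, sq_abs]
    linarith
  nlinarith [norm_nonneg (x + τ • d)]

theorem sphereHitTime_eq_zero {x d : F} (hx : ‖x‖ = 1) (hd : 0 ≤ ⟪x, d⟫) :
    sphereHitTime x d = 0 := by
  simp [sphereHitTime, rayDiscr, hx, Real.sqrt_sq hd]

theorem inner_sub_pos_of_norm_le {x y : F} (hy : ‖y‖ ≤ ‖x‖) (hne : y ≠ x) :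
    0 < ⟪x, x - y⟫ := by
  have hxy : 0 < ‖x - y‖ := norm_pos_iff.2 (sub_ne_zero.2 hne.symm)
  have : 2 * ⟪x, x - y⟫ = ‖x‖ ^ 2 - ‖y‖ ^ 2 + ‖x - y‖ ^ 2 := by
    rw [inner_sub_right, real_inner_self_eq_norm_sq, norm_sub_sq_real]; ring
  nlinarith [norm_nonneg y]

theorem rayDiscr_pos {x y : F} (hx : ‖x‖ ≤ 1) (hy : ‖y‖ ≤ 1) (hne : y ≠ x) :
    0 < rayDiscr x (x - y) := by
  have hxy : 0 < ‖x - y‖ := norm_pos_iff.2 (sub_ne_zero.2 hne.symm)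
  rcases hx.lt_or_eq with hx | hx
  · have : 0 < 1 - ‖x‖ ^ 2 := by nlinarith [norm_nonneg x]
    unfold rayDiscr; positivity
  · have := inner_sub_pos_of_norm_le (hx ▸ hy) hne
    simp only [rayDiscr, hx]; positivity

theorem contDiff_rayDiscr {k : WithTop ℕ∞} : ContDiff ℝ k fun p : F × F => rayDiscr p.1 p.2 :=
  (contDiff_inner.pow 2).add
    ((contDiff_snd.norm_sq ℝ).mul (contDiff_const.sub (contDiff_fst.norm_sq ℝ)))

theorem contDiffOn_sphereHitTime {k : WithTop ℕ∞} :
    ContDiffOn ℝ k (fun p : F × F => sphereHitTime p.1 p.2) {p | 0 < rayDiscr p.1 p.2} := by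
  refine ((contDiff_inner (𝕜 := ℝ)).neg.contDiffOn.add
    (contDiff_rayDiscr.contDiffOn.sqrt fun p hp => hp.ne')).div (contDiff_snd.norm_sq ℝ).contDiffOn
    fun p hp => ?_
  exact pow_ne_zero 2 (norm_ne_zero_iff.2 (ne_zero_of_rayDiscr_pos hp))

theorem exists_fixedPoint_of_contDiff [FiniteDimensional ℝ F] {f : F → F} (hf : ContDiff ℝ 1 f)
    (hmaps : MapsTo f (closedBall 0 1) (closedBall 0 1)) : ∃ x ∈ closedBall (0 : F) 1, f x = x := by
  by_contra! hne
  have hpair : ContDiff ℝ 1 fun x => (x, x - f x) := contDiff_id.prodMk (contDiff_id.sub hf)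
  refine not_mapsTo_sphere_of_contDiffOn (r := fun x => x + sphereHitTime x (x - f x) • (x - f x))
    (U := {x | 0 < rayDiscr x (x - f x)}) ?_ (fun x hx => ?_) ?_ (fun x hx => ?_)
    fun x hx => mem_sphere_zero_iff_norm.2 (norm_add_sphereHitTime_smul hx)
  · exact isOpen_lt continuous_const ((contDiff_rayDiscr (k := 0)).continuous.comp hpair.continuous)
  · exact rayDiscr_pos (mem_closedBall_zero_iff.1 hx) (mem_closedBall_zero_iff.1 (hmaps hx))
      (hne x hx)
  · exact contDiffOn_id.add ((contDiffOn_sphereHitTime.comp hpair.contDiffOn fun x hx => hx).smul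
      (contDiff_id.sub hf).contDiffOn)
  · have hx1 := mem_sphere_zero_iff_norm.1 hx
    have hfx : ‖f x‖ ≤ ‖x‖ := hx1 ▸ mem_closedBall_zero_iff.1 (hmaps (sphere_subset_closedBall hx))
    simp [sphereHitTime_eq_zero hx1
      (inner_sub_pos_of_norm_le hfx (hne x (sphere_subset_closedBall hx))).le]

end Brouwer

theorem exists_fixedPoint_of_contDiff_of_isBounded_range {E : Type*} [NormedAddCommGroup E]
    [NormedSpace ℝ E] [FiniteDimensional ℝ E] {f : E → E} (hf : ContDiff ℝ 1 f)
    (hb : Bornology.IsBounded (range f)) : ∃ x, f x = x := by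
  let e : E ≃L[ℝ] EuclideanSpace ℝ (Fin (Module.finrank ℝ E)) :=
    ContinuousLinearEquiv.ofFinrankEq (by simp)
  obtain ⟨ρ, hρ, hρf⟩ := (e.lipschitz.isBounded_image hb).subset_closedBall_lt 0 0
  have hg : ContDiff ℝ 1 fun y => ρ⁻¹ • e (f (e.symm (ρ • y))) :=
    (e.contDiff.comp (hf.comp (e.symm.contDiff.comp (contDiff_const_smul ρ)))).const_smul ρ⁻¹
  obtain ⟨y, -, hy⟩ := exists_fixedPoint_of_contDiff hg fun y _ => by
    have := mem_closedBall_zero_iff.1 (hρf (mem_image_of_mem e (mem_range_self (e.symm (ρ • y)))))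
    rw [mem_closedBall_zero_iff, norm_smul, norm_inv, Real.norm_of_nonneg hρ.le]
    exact inv_mul_le_one_of_le₀ this hρ.le
  have hy' : e (f (e.symm (ρ • y))) = ρ • y := by
    conv_rhs => rw [← hy, smul_inv_smul₀ hρ.ne']
  exact ⟨e.symm (ρ • y), e.injective (by rw [e.apply_symm_apply, hy'])⟩

noncomputable def smoothPosPart (ε s : ℝ) : ℝ := (s + √(s ^ 2 + ε ^ 2)) / 2

theorem max_zero_le_smoothPosPart (ε s : ℝ) : max s 0 ≤ smoothPosPart ε s := by
  have h : |s| ≤ √(s ^ 2 + ε ^ 2) := Real.abs_le_sqrt (by nlinarith [sq_nonneg ε])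
  unfold smoothPosPart
  rcases le_total s 0 with hs | hs
  · rw [max_eq_right hs]; linarith [neg_abs_le s]
  · rw [max_eq_left hs]; linarith [le_abs_self s]

theorem smoothPosPart_le {ε : ℝ} (hε : 0 ≤ ε) (s : ℝ) : smoothPosPart ε s ≤ max s 0 + ε := by
  have h : √(s ^ 2 + ε ^ 2) ≤ |s| + ε := by
    rw [Real.sqrt_le_left (by positivity)]
    nlinarith [sq_abs s, abs_nonneg s]
  unfold smoothPosPart
  rcases le_total s 0 with hs | hs
  · rw [max_eq_right hs]; rw [abs_of_nonpos hs] at h; linarith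
  · rw [max_eq_left hs]; rw [abs_of_nonneg hs] at h; linarith

theorem contDiff_smoothPosPart {ε : ℝ} (hε : ε ≠ 0) {k : WithTop ℕ∞} :
    ContDiff ℝ k (smoothPosPart ε) :=
  (contDiff_id.add (((contDiff_id.pow 2).add contDiff_const).sqrt fun s => by positivity)).div_const
    2

noncomputable def smoothClamp (ε R s : ℝ) : ℝ := R - smoothPosPart ε (R - smoothPosPart ε s)

theorem abs_smoothClamp_sub_le {ε : ℝ} (hε : 0 ≤ ε) (R s : ℝ) :
    |smoothClamp ε R s - min (max s 0) R| ≤ ε := by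
  set u := smoothPosPart ε s
  have hu := max_zero_le_smoothPosPart ε s
  have hu' := smoothPosPart_le hε s
  have hv := max_zero_le_smoothPosPart ε (R - u)
  have hv' := smoothPosPart_le hε (R - u)
  have hmin : R - max (R - u) 0 = min u R := by
    rcases le_total u R with h | h
    · rw [max_eq_left (by linarith), min_eq_left h]; ring
    · rw [max_eq_right (by linarith), min_eq_right h]; ring
  have hlow : min (max s 0) R ≤ min u R := min_le_min_right R hu
  have hupp : min u R ≤ min (max s 0) R + ε := by
    rcases le_total (max s 0) R with h | h
    · rw [min_eq_left h]; exact (min_le_left _ _).trans hu'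
    · rw [min_eq_right h]; exact (min_le_right _ _).trans (by linarith)
  rw [smoothClamp, abs_le]
  constructor <;> linarith

theorem neg_le_smoothClamp {ε R : ℝ} (hε : 0 ≤ ε) (hR : 0 ≤ R) (s : ℝ) :
    -ε ≤ smoothClamp ε R s := by
  have h := (abs_le.1 (abs_smoothClamp_sub_le hε R s)).1
  linarith [le_min (le_max_right s 0) hR]

theorem smoothClamp_le_add {ε : ℝ} (hε : 0 ≤ ε) (R s : ℝ) : smoothClamp ε R s ≤ R + ε := by
  have h := (abs_le.1 (abs_smoothClamp_sub_le hε R s)).2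
  linarith [min_le_right (max s 0) R]

theorem contDiff_smoothClamp {ε : ℝ} (hε : ε ≠ 0) (R : ℝ) {k : WithTop ℕ∞} :
    ContDiff ℝ k (smoothClamp ε R) :=
  contDiff_const.sub ((contDiff_smoothPosPart hε).comp
    (contDiff_const.sub (contDiff_smoothPosPart hε)))

theorem le_of_eq_smoothClamp_sub {ε R z w : ℝ} (hε : 0 ≤ ε) (hz : z = smoothClamp ε R (z - w))
    (h : 2 * ε < z) : w ≤ ε := by
  have hclamp := (abs_le.1 (abs_smoothClamp_sub_le hε R (z - w))).2
  rw [← hz] at hclamp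
  have hmin := min_le_left (max (z - w) 0) R
  rcases le_total (z - w) 0 with h' | h'
  · rw [max_eq_right h'] at hmin hclamp; linarith
  · rw [max_eq_left h'] at hmin hclamp; linarith

theorem tendsto_smoothClamp {ι : Type*} {l : Filter ι} {ε R s : ι → ℝ} {s₀ : ℝ}
    (hε0 : ∀ i, 0 ≤ ε i) (hε : Tendsto ε l (𝓝 0)) (hR : Tendsto R l atTop)
    (hs : Tendsto s l (𝓝 s₀)) :
    Tendsto (fun i => smoothClamp (ε i) (R i) (s i)) l (𝓝 (max s₀ 0)) := by
  have hmax : Tendsto (fun i => max (s i) 0) l (𝓝 (max s₀ 0)) := hs.max tendsto_const_nhds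
  have hmin : Tendsto (fun i => min (max (s i) 0) (R i)) l (𝓝 (max s₀ 0)) := by
    refine hmax.congr' ?_
    filter_upwards [hmax.eventually (gt_mem_nhds (lt_add_one _)),
      hR.eventually_ge_atTop (max s₀ 0 + 1)] with i h1 h2
    exact (min_eq_left (by linarith)).symm
  refine hmin.congr_dist (squeeze_zero (fun _ => dist_nonneg) (fun i => ?_) hε)
  rw [dist_comm, Real.dist_eq]
  exact abs_smoothClamp_sub_le (hε0 i) _ _

theorem exists_eq_smoothClamp_sub {n : ℕ} {w : (Fin n → ℝ) → Fin n → ℝ} (hw : ContDiff ℝ 1 w)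
    {ε R : ℝ} (hε : 0 < ε) (hR : 0 ≤ R) :
    ∃ z : Fin n → ℝ, ∀ i, z i = smoothClamp ε R (z i - w z i) := by
  obtain ⟨z, hz⟩ := exists_fixedPoint_of_contDiff_of_isBounded_range
    (f := fun x i => smoothClamp ε R (x i - w x i))
    (contDiff_pi.2 fun i => (contDiff_smoothClamp hε.ne' R).comp
      ((contDiff_apply ℝ ℝ i).sub ((contDiff_apply ℝ ℝ i).comp hw)))
    ((isBounded_Icc (fun _ => -ε) fun _ => R + ε).subset <| range_subset_iff.2 fun x =>
      ⟨fun _ => neg_le_smoothClamp hε.le hR _, fun _ => smoothClamp_le_add hε.le R _⟩)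
  exact ⟨z, fun i => (congrFun hz i).symm⟩

section Tensor

variable {m n : ℕ} (A : (Fin (m + 2) → Fin n) → ℝ)

theorem contDiff_Axm1 {k : WithTop ℕ∞} : ContDiff ℝ k (Axm1 A) :=
  contDiff_pi.2 fun _ => ContDiff.sum fun f _ =>
    contDiff_const.mul (contDiff_prod fun j _ => contDiff_apply ℝ ℝ (f j))

theorem Axm1_smul (c : ℝ) (x : Fin n → ℝ) (i : Fin n) :
    Axm1 A (c • x) i = c ^ (m + 1) * Axm1 A x i := by
  simp only [Axm1, Finset.mul_sum, Pi.smul_apply, smul_eq_mul, Finset.prod_mul_distrib,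
    Finset.prod_const, Finset.card_univ, Fintype.card_fin]
  exact Finset.sum_congr rfl fun f _ => by ring

theorem continuous_Axm1 : Continuous (Axm1 A) := (contDiff_Axm1 A (k := 0)).continuous

variable {A}

theorem isTCPSol_of_eq_max {q x : Fin n → ℝ}
    (hx : ∀ i, x i = max (x i - (q i + Axm1 A x i)) 0) : IsTCPSol A q x := by
  have key : ∀ i, 0 ≤ x i ∧ 0 ≤ q i + Axm1 A x i ∧ x i * (q i + Axm1 A x i) = 0 := fun i => by
    have h := hx i
    rcases le_total (x i - (q i + Axm1 A x i)) 0 with h' | h'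
    · rw [max_eq_right h'] at h
      exact ⟨h.ge, by linarith, by simp [h]⟩
    · rw [max_eq_left h'] at h
      have hw : q i + Axm1 A x i = 0 := by linarith
      exact ⟨by linarith, hw.ge, by simp [hw]⟩
  exact ⟨fun i => (key i).1, fun i => (key i).2.1, Finset.sum_eq_zero fun i _ => (key i).2.2⟩

theorem StrictlySemiPositive.not_tendsto_norm_atTop (hA : StrictlySemiPositive A)
    (q : Fin n → ℝ) {ε : ℕ → ℝ} (hε : Tendsto ε atTop (𝓝 0)) {z : ℕ → Fin n → ℝ}
    (hlow : ∀ k i, -ε k ≤ z k i) (hup : ∀ k i, 2 * ε k < z k i → q i + Axm1 A (z k) i ≤ ε k) :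
    ¬ Tendsto (fun k => ‖z k‖) atTop atTop := by
  intro hT
  obtain ⟨y, -, φ, hφ, hlim⟩ := (isCompact_closedBall (0 : Fin n → ℝ) 1).tendsto_subseq
    (x := fun k => ‖z k‖⁻¹ • z k) fun k => mem_closedBall_zero_iff.2 <| by
      rw [norm_smul, norm_inv, norm_norm]; exact inv_mul_le_one_of_le₀ le_rfl (norm_nonneg _)
  set N := fun l => ‖z (φ l)‖
  have hN : Tendsto N atTop atTop := hT.comp hφ.tendsto_atTop
  have hεφ : Tendsto (ε ∘ φ) atTop (𝓝 0) := hε.comp hφ.tendsto_atTop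
  have hcoord : ∀ i, Tendsto (fun l => (N l)⁻¹ * z (φ l) i) atTop (𝓝 (y i)) :=
    fun i => tendsto_pi_nhds.1 hlim i
  have hNpos : ∀ᶠ l in atTop, 0 < N l := hN.eventually_gt_atTop 0
  have hy1 : ‖y‖ = 1 := tendsto_nhds_unique hlim.norm <| tendsto_const_nhds.congr' <|
    hNpos.mono fun l hl => (norm_smul_inv_norm (norm_pos_iff.1 hl)).symm
  have hy0 : ∀ i, 0 ≤ y i := fun i => by
    refine le_of_tendsto_of_tendsto (by simpa using (hN.inv_tendsto_atTop.mul hεφ).neg) (hcoord i)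
      (hNpos.mono fun l hl => ?_)
    have := mul_le_mul_of_nonneg_left (hlow (φ l) i) (inv_nonneg.2 hl.le)
    linarith
  obtain ⟨j, hyj, hAyj⟩ := hA y hy0 (by rintro rfl; simp at hy1)
  have hzj : Tendsto (fun l => z (φ l) j) atTop atTop :=
    (hN.atTop_mul_pos hyj (hcoord j)).congr' <| hNpos.mono fun l hl => by field_simp
  have hbound : ∀ᶠ l in atTop,
      Axm1 A ((N l)⁻¹ • z (φ l)) j ≤ (N l)⁻¹ ^ (m + 1) * (ε (φ l) - q j) := by
    filter_upwards [hzj.eventually_gt_atTop 2, hεφ.eventually (gt_mem_nhds one_pos)] with l h2 h1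
    rw [Axm1_smul]
    exact mul_le_mul_of_nonneg_left (by linarith [hup (φ l) j (by simp at h1; linarith)])
      (by positivity)
  have hzero : Tendsto (fun l => (N l)⁻¹ ^ (m + 1) * (ε (φ l) - q j)) atTop (𝓝 0) := by
    simpa using (hN.inv_tendsto_atTop.pow (m + 1)).mul (hεφ.sub_const (q j))
  have hAconv : Tendsto (fun l => Axm1 A ((N l)⁻¹ • z (φ l)) j) atTop (𝓝 (Axm1 A y j)) :=
    (((continuous_apply j).comp (continuous_Axm1 A)).tendsto y).comp hlim
  exact (le_of_tendsto_of_tendsto hAconv hzero hbound).not_gt hAyj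

theorem exists_isTCPSol_of_not_tendsto_norm_atTop (q : Fin n → ℝ) {ε R : ℕ → ℝ}
    (hε0 : ∀ k, 0 ≤ ε k) (hε : Tendsto ε atTop (𝓝 0)) (hR : Tendsto R atTop atTop)
    {z : ℕ → Fin n → ℝ}
    (hz : ∀ k i, z k i = smoothClamp (ε k) (R k) (z k i - (q i + Axm1 A (z k) i)))
    (hT : ¬ Tendsto (fun k => ‖z k‖) atTop atTop) : ∃ x, IsTCPSol A q x := by
  obtain ⟨B, hB⟩ : ∃ B, ∃ᶠ k in atTop, ‖z k‖ < B := by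
    simpa only [Filter.tendsto_atTop, not_forall, not_eventually, not_le] using hT
  obtain ⟨φ, hφ, hφB⟩ := extraction_of_frequently_atTop hB
  obtain ⟨x, -, ψ, hψ, hlim⟩ := (isCompact_closedBall (0 : Fin n → ℝ) B).tendsto_subseq
    fun l => mem_closedBall_zero_iff.2 (hφB l).le
  have hsub : Tendsto (φ ∘ ψ) atTop atTop := (hφ.comp hψ).tendsto_atTop
  refine ⟨x, isTCPSol_of_eq_max fun i => tendsto_nhds_unique (tendsto_pi_nhds.1 hlim i) ?_⟩
  have hw : Tendsto (fun l => q i + Axm1 A (z (φ (ψ l))) i) atTop (𝓝 (q i + Axm1 A x i)) :=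
    tendsto_const_nhds.add ((((continuous_apply i).comp (continuous_Axm1 A)).tendsto x).comp hlim)
  exact (tendsto_smoothClamp (fun _ => hε0 _) (hε.comp hsub) (hR.comp hsub)
    ((tendsto_pi_nhds.1 hlim i).sub hw)).congr fun l => (hz _ i).symm

theorem StrictlySemiPositive.qTensor (hA : StrictlySemiPositive A) : QTensor A := by
  intro q
  have hε : ∀ k : ℕ, 0 < 1 / ((k : ℝ) + 1) := fun k => by positivity
  choose z hz using fun k : ℕ => exists_eq_smoothClamp_sub (w := fun x => q + Axm1 A x)
    (contDiff_const.add (contDiff_Axm1 A)) (hε k) (by positivity : (0 : ℝ) ≤ k + 1)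
  refine exists_isTCPSol_of_not_tendsto_norm_atTop q (fun k => (hε k).le)
    tendsto_one_div_add_atTop_nhds_zero_nat (tendsto_atTop_add_const_right _ 1
      tendsto_natCast_atTop_atTop) hz ?_
  exact hA.not_tendsto_norm_atTop q tendsto_one_div_add_atTop_nhds_zero_nat
    (fun k i => hz k i ▸ neg_le_smoothClamp (hε k).le (by positivity) _)
    fun k i => le_of_eq_smoothClamp_sub (hε k).le (hz k i)

theorem PTensor.strictlySemiPositive (hA : PTensor A) : StrictlySemiPositive A := by
  intro x hx hne
  obtain ⟨i, hi⟩ := hA x hne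
  have hxi : 0 < x i := (hx i).lt_of_ne fun h => by simp [← h] at hi
  exact ⟨i, hxi, pos_of_mul_pos_right hi hxi.le⟩

end Tensor

theorem stmt6 {m n : ℕ} (A : (Fin (m + 2) → Fin n) → ℝ) :
    (StrictlySemiPositive A → QTensor A) ∧ (PTensor A → QTensor A) :=
  ⟨StrictlySemiPositive.qTensor, fun hA => hA.strictlySemiPositive.qTensor⟩
end

section
/- Let A be a symmetric nonnegative tensor. Then A is a Q-tensor if and only if A is strictly copositive. -/
open Finset

/-!
For a nonnegative tensor, being a Q-tensor and being strictly copositive both mean that every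
diagonal entry is positive. The TCP with `q = 1 - 2eᵢ` forces `a_{i…i} > 0`: complementarity
pushes every solution onto the `i`-th axis, where `(A x^{m+1})ᵢ = a_{i…i} xᵢ^{m+1}`. Conversely,
for symmetric `A` the gradient of `A x^{m+2}` is `(m + 2) A x^{m+1}`, so the TCP `(q, A)` is the
KKT system of minimising `A x^{m+2} + (m + 2) qᵀx` over the nonnegative orthant; strict
copositivity makes this objective coercive there, so a minimiser exists.
-/

open Filter Matrix

lemma Fin.prod_univ_erase {M : Type*} [CommMonoid M] {k : ℕ} (j : Fin (k + 1))
    (h : Fin (k + 1) → M) : ∏ i ∈ univ.erase j, h i = ∏ i, h (j.succAbove i) := by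
  rw [← compl_singleton, ← Fin.image_succAbove_univ,
    prod_image fun _ _ _ _ h => Fin.succAbove_right_injective h]

lemma hasDerivAt_prod_add_mul {k : ℕ} (y w : Fin (k + 1) → ℝ) :
    HasDerivAt (fun t : ℝ => ∏ j, (y j + t * w j)) (∑ j, w j * ∏ l, y (j.succAbove l)) 0 :=
  (HasDerivAt.fun_finsetProd (u := univ) fun j _ =>
    ((hasDerivAt_id (0 : ℝ)).mul_const (w j)).const_add (y j)).congr_deriv
    (by simp [Fin.prod_univ_erase, mul_comm])

lemma IsLocalMinOn.kkt_of_hasDerivAt_line {ι : Type*} [DecidableEq ι] {g : (ι → ℝ) → ℝ}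
    {x : ι → ℝ} (hmin : IsLocalMinOn g (Set.Ici 0) x) (hx : 0 ≤ x) {i : ι} {d : ℝ}
    (hd : HasDerivAt (fun t : ℝ => g (x + t • Pi.single i 1)) d 0) :
    0 ≤ d ∧ (0 < x i → d = 0) := by
  have hxi : 0 ≤ x i := hx i
  have hline : IsLocalMinOn (fun t : ℝ => g (x + t • Pi.single i 1)) (Set.Ici (-x i)) 0 := by
    refine IsLocalMinOn.comp_continuousOn (t := Set.Ici 0)
      (g := fun t : ℝ => x + t • Pi.single i 1)
      (by simpa using hmin) (fun t (ht : -x i ≤ t) k => ?_) (by fun_prop) (by simpa using hxi)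
    rcases eq_or_ne k i with rfl | hk
    · simpa [neg_le_iff_add_nonneg'] using ht
    · simpa [hk] using hx k
  refine ⟨?_, fun hpos => (hline.isLocalMin (Ici_mem_nhds (by linarith))).hasDerivAt_eq_zero hd⟩
  have hone : (1 : ℝ) ∈ posTangentConeAt (Set.Ici (-x i)) 0 :=
    mem_posTangentConeAt_of_segment_subset <| by
      rw [segment_eq_Icc (by norm_num)]
      exact fun t ht => by simp only [Set.mem_Ici]; linarith [ht.1]
  simpa using hline.hasFDerivWithinAt_nonneg hd.hasFDerivAt.hasFDerivWithinAt hone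

section Tensor

variable {m n : ℕ} {A : (Fin (m + 2) → Fin n) → ℝ}

lemma Axm1_nonneg (hA : ∀ f, 0 ≤ A f) {x : Fin n → ℝ} (hx : 0 ≤ x) (i : Fin n) :
    0 ≤ Axm1 A x i :=
  sum_nonneg fun _ _ => mul_nonneg (hA _) (prod_nonneg fun _ _ => hx _)

lemma Axm1_eq_of_forall_ne_eq_zero {x : Fin n → ℝ} {i : Fin n} (hx : ∀ k ≠ i, x k = 0) :
    Axm1 A x i = A (fun _ => i) * x i ^ (m + 1) := by
  rw [Axm1, sum_eq_single (fun _ => i)]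
  · rw [show (Fin.cons i fun _ => i : Fin (m + 2) → Fin n) = fun _ => i from
      funext (Fin.cases rfl fun _ => rfl)]
    simp
  · intro f _ hf
    obtain ⟨j, hj⟩ := Function.ne_iff.mp hf
    rw [prod_eq_zero (mem_univ j) (hx _ hj), mul_zero]
  · simp

lemma Axm_zero : Axm A 0 = 0 := by
  simp [Axm]

lemma Axm_smul (c : ℝ) (x : Fin n → ℝ) : Axm A (c • x) = c ^ (m + 2) * Axm A x := by
  simp only [Axm, mul_sum, Pi.smul_apply, smul_eq_mul, prod_mul_distrib, prod_const, card_univ,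
    Fintype.card_fin]
  exact sum_congr rfl fun _ _ => by ring

lemma continuous_Axm : Continuous (Axm A) := by
  unfold Axm
  fun_prop

lemma IsTCPSol.mul_eq_zero {q x : Fin n → ℝ} (h : IsTCPSol A q x) (i : Fin n) :
    x i * (q i + Axm1 A x i) = 0 :=
  (sum_eq_zero_iff_of_nonneg fun j _ => mul_nonneg (h.1 j) (h.2.1 j)).mp h.2.2 i (mem_univ i)

lemma isTCPSol_of_complementarity {q x : Fin n → ℝ} (hx : 0 ≤ x)
    (hw : ∀ i, 0 ≤ q i + Axm1 A x i) (hc : ∀ i, 0 < x i → q i + Axm1 A x i = 0) :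
    IsTCPSol A q x := by
  refine ⟨hx, hw, sum_eq_zero fun i _ => ?_⟩
  rcases (hx i).eq_or_lt with h | h
  · simp [← h]
  · rw [hc i h, mul_zero]

lemma QTensor.diag_pos (hA : ∀ f, 0 ≤ A f) (hQ : QTensor A) (i : Fin n) :
    0 < A (fun _ => i) := by
  obtain ⟨x, hx⟩ := hQ (fun k => if k = i then -1 else 1)
  have hsupp : ∀ k ≠ i, x k = 0 := fun k hk => by
    have hk' := hx.mul_eq_zero k
    rw [if_neg hk] at hk'
    exact (mul_eq_zero.mp hk').resolve_right (by linarith [Axm1_nonneg hA hx.1 k])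
  have hwi : 0 ≤ -1 + Axm1 A x i := by simpa using hx.2.1 i
  rw [Axm1_eq_of_forall_ne_eq_zero hsupp] at hwi
  refine (hA _).lt_of_ne' fun h0 => ?_
  rw [h0] at hwi
  norm_num at hwi

lemma strictlyCopositive_of_diag_pos (hA : ∀ f, 0 ≤ A f) (hd : ∀ i, 0 < A (fun _ => i)) :
    StrictlyCopositive A := by
  intro x hx hx0
  obtain ⟨i, hi⟩ := Function.ne_iff.mp hx0
  calc 0 < A (fun _ => i) * ∏ _j : Fin (m + 2), x i :=
        mul_pos (hd i) (prod_pos fun _ _ => (hx i).lt_of_ne' hi)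
    _ ≤ Axm A x :=
        single_le_sum (f := fun f => A f * ∏ j, x (f j))
          (fun f _ => mul_nonneg (hA f) (prod_nonneg fun _ _ => hx _)) (mem_univ _)

lemma SymTensor.sum_mul_prod_succAbove (hsym : SymTensor A) (j : Fin (m + 2))
    (x v : Fin n → ℝ) :
    ∑ f : Fin (m + 2) → Fin n, A f * (v (f j) * ∏ l, x (f (j.succAbove l))) =
      v ⬝ᵥ Axm1 A x := by
  rw [← (Fin.insertNthEquiv (fun _ => Fin n) j).sum_comp, Fintype.sum_prod_type]
  refine sum_congr rfl fun a _ => ?_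
  rw [Axm1, mul_sum]
  refine sum_congr rfl fun g _ => ?_
  have hA : A (Fin.insertNthEquiv _ j (a, g)) = A (Fin.cons a g) :=
    (congrArg A (Fin.cons_comp_cycleRange a g j)).symm.trans (hsym _ _)
  rw [hA]
  simp only [Fin.insertNthEquiv_apply, Fin.insertNth_apply_same, Fin.insertNth_apply_succAbove]
  ring

lemma SymTensor.hasDerivAt_Axm_add_smul (hsym : SymTensor A) (x v : Fin n → ℝ) :
    HasDerivAt (fun t : ℝ => Axm A (x + t • v)) ((m + 2) * (v ⬝ᵥ Axm1 A x)) 0 :=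
  (HasDerivAt.fun_sum (u := univ) fun f _ =>
    (hasDerivAt_prod_add_mul (x ∘ f) (v ∘ f)).const_mul (A f)).congr_deriv <| by
    simp only [Function.comp_apply, mul_sum]
    rw [sum_comm]
    simp [hsym.sum_mul_prod_succAbove, add_assoc, one_add_one_eq_two]

lemma StrictlyCopositive.exists_pos_mul_norm_pow_le (hA : StrictlyCopositive A) :
    ∃ c > 0, ∀ x : Fin n → ℝ, 0 ≤ x → c * ‖x‖ ^ (m + 2) ≤ Axm A x := by
  set S := Set.Ici (0 : Fin n → ℝ) ∩ Metric.sphere 0 1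
  have hnormalize : ∀ x : Fin n → ℝ, 0 ≤ x → x ≠ 0 →
      ‖x‖⁻¹ • x ∈ S ∧ Axm A x = ‖x‖ ^ (m + 2) * Axm A (‖x‖⁻¹ • x) := fun x hx hx0 =>
    ⟨⟨smul_nonneg (by positivity) hx, mem_sphere_zero_iff_norm.mpr (norm_smul_inv_norm hx0)⟩,
      by rw [Axm_smul, ← mul_assoc, ← mul_pow, mul_inv_cancel₀ (norm_ne_zero_iff.mpr hx0),
        one_pow, one_mul]⟩
  by_cases hS : S.Nonempty
  · obtain ⟨z, hzS, hz⟩ := ((isCompact_sphere 0 1).inter_left isClosed_Ici).exists_isMinOn hS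
      continuous_Axm.continuousOn
    have hz0 : z ≠ 0 := by
      rintro rfl
      simpa using hzS.2
    refine ⟨Axm A z, hA z hzS.1 hz0, fun x hx => ?_⟩
    rcases eq_or_ne x 0 with rfl | hx0
    · simp [Axm_zero]
    obtain ⟨hxS, hxA⟩ := hnormalize x hx hx0
    rw [hxA, mul_comm]
    exact mul_le_mul_of_nonneg_left (hz hxS) (by positivity)
  · refine ⟨1, one_pos, fun x hx => ?_⟩
    rcases eq_or_ne x 0 with rfl | hx0
    · simp [Axm_zero]
    exact absurd ⟨_, (hnormalize x hx hx0).1⟩ hS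

def tcpObjective (A : (Fin (m + 2) → Fin n) → ℝ) (q x : Fin n → ℝ) : ℝ :=
  Axm A x + (m + 2) * (q ⬝ᵥ x)

lemma continuous_tcpObjective (q : Fin n → ℝ) : Continuous (tcpObjective A q) :=
  continuous_Axm.add (continuous_const.mul (continuous_const.dotProduct continuous_id))

lemma SymTensor.hasDerivAt_tcpObjective_add_smul (hsym : SymTensor A) (q x v : Fin n → ℝ) :
    HasDerivAt (fun t : ℝ => tcpObjective A q (x + t • v))
      ((m + 2) * (v ⬝ᵥ (q + Axm1 A x))) 0 := by
  have hlin : HasDerivAt (fun t : ℝ => (m + 2) * (q ⬝ᵥ (x + t • v)))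
      ((m + 2) * (q ⬝ᵥ v)) 0 := by
    have hf : (fun t : ℝ => (m + 2) * (q ⬝ᵥ (x + t • v))) =
        fun t => (m + 2) * (q ⬝ᵥ x) + t * ((m + 2) * (q ⬝ᵥ v)) := by
      ext t
      simp only [dotProduct_add, dotProduct_smul, smul_eq_mul]
      ring
    rw [hf]
    simpa using (hasDerivAt_mul_const ((m + 2) * (q ⬝ᵥ v))).const_add ((m + 2) * (q ⬝ᵥ x))
  refine ((hsym.hasDerivAt_Axm_add_smul x v).add hlin).congr_deriv ?_
  rw [dotProduct_add, dotProduct_comm v q]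
  ring

lemma StrictlyCopositive.exists_isMinOn_tcpObjective (hA : StrictlyCopositive A)
    (q : Fin n → ℝ) : ∃ x ∈ Set.Ici 0, IsMinOn (tcpObjective A q) (Set.Ici 0) x := by
  obtain ⟨c, hc, hcA⟩ := hA.exists_pos_mul_norm_pow_le
  set C := (m + 2) * ∑ k, |q k|
  have hC : 0 ≤ C := by positivity
  have hpoly : ∀ r, max 1 (C / c) ≤ r → C * r ≤ c * r ^ (m + 2) := fun r hr => by
    have hr1 : 1 ≤ r := le_of_max_le_left hr
    have hcr : C ≤ c * r := (div_le_iff₀' hc).mp (le_of_max_le_right hr)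
    calc C * r ≤ c * r * r := mul_le_mul_of_nonneg_right hcr (by linarith)
      _ ≤ c * r * r * r ^ m := le_mul_of_one_le_right (by positivity) (one_le_pow₀ hr1)
      _ = c * r ^ (m + 2) := by ring
  refine (continuous_tcpObjective q).continuousOn.exists_isMinOn' isClosed_Ici
    (Set.mem_Ici.mpr le_rfl) ?_
  rw [eventually_inf_principal]
  filter_upwards [tendsto_norm_cocompact_atTop.eventually_ge_atTop (max 1 (C / c))]
    with x hR hx
  have hqx : |q ⬝ᵥ x| ≤ (∑ k, |q k|) * ‖x‖ :=
    calc |q ⬝ᵥ x| ≤ ∑ k, |q k * x k| := abs_sum_le_sum_abs _ _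
      _ ≤ ∑ k, |q k| * ‖x‖ := sum_le_sum fun k _ => by
          rw [abs_mul, ← Real.norm_eq_abs (x k)]
          exact mul_le_mul_of_nonneg_left (norm_le_pi_norm x k) (abs_nonneg _)
      _ = (∑ k, |q k|) * ‖x‖ := (sum_mul ..).symm
  have hm : (0 : ℝ) ≤ m + 2 := by positivity
  have hlin : -(C * ‖x‖) ≤ (m + 2) * (q ⬝ᵥ x) := by
    nlinarith [neg_abs_le (q ⬝ᵥ x)]
  simp only [tcpObjective, Axm_zero, dotProduct_zero, mul_zero, add_zero]
  linarith [hcA x hx, hpoly _ hR]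

theorem StrictlyCopositive.qTensor (hsym : SymTensor A) (hA : StrictlyCopositive A) :
    QTensor A := by
  intro q
  obtain ⟨x, hx, hmin⟩ := hA.exists_isMinOn_tcpObjective q
  have hkkt (i : Fin n) := hmin.localize.kkt_of_hasDerivAt_line hx
    (hsym.hasDerivAt_tcpObjective_add_smul q x (Pi.single i 1))
  simp only [single_one_dotProduct, Pi.add_apply] at hkkt
  have hm : (0 : ℝ) < m + 2 := by positivity
  exact ⟨x, isTCPSol_of_complementarity hx (fun i => nonneg_of_mul_nonneg_right (hkkt i).1 hm)
    fun i hi => (mul_eq_zero.mp ((hkkt i).2 hi)).resolve_left hm.ne'⟩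

end Tensor

theorem stmt12 {m n : ℕ} (A : (Fin (m + 2) → Fin n) → ℝ)
    (hsym : SymTensor A) (hA : ∀ f, 0 ≤ A f) :
    QTensor A ↔ StrictlyCopositive A :=
  ⟨fun hQ => strictlyCopositive_of_diag_pos hA (hQ.diag_pos hA),
    StrictlyCopositive.qTensor hsym⟩
end
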